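/- arXiv:math/0609823 — 3 statements merged into one kernel-verified Lean document; each statement's English description precedes it below -/
import Mathlib

section
/- The difference Euler operator measures the degree of homogeneity: let k ≥ 0 and fix a sign choice. If P lies in the real linear span of the lattice functions m ↦ (mh)_∓^{(α)} a with |α| = k and a ∈ Cl_{0,n}, then E_h^± P = k·P. -/
open Finset

noncomputable section

/-- The quadratic form on `ℝⁿ` whose Clifford algebra is `Cl_{0,n}`:
`Q(x) = −(x₁² + ⋯ + xₙ²)`, so that the generators satisfy `eᵢeⱼ + eⱼeᵢ = −2δᵢⱼ`. -/
def negQ (n : ℕ) : QuadraticForm ℝ (Fin n → ℝ) :=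
  QuadraticMap.weightedSumSquares ℝ (fun _ : Fin n => (-1 : ℝ))

/-- The Clifford algebra `Cl_{0,n}`. -/
abbrev Cl (n : ℕ) := CliffordAlgebra (negQ n)

/-- The generators `e i` of `Cl_{0,n}`. -/
def eCl (n : ℕ) (i : Fin n) : Cl n := CliffordAlgebra.ι (negQ n) (Pi.single i 1)

/-- `1` for the forward (upper sign) choice, `-1` for the backward one. -/
def sgn (σ : Bool) : ℝ := if σ then 1 else -1

/-- Forward/backward difference `∂_h^{±i}` of a lattice function with values in a real module. -/
def fdiff {n : ℕ} {A : Type*} [AddCommGroup A] [Module ℝ A] (σ : Bool) (h : ℝ) (i : Fin n)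
    (f : (Fin n → ℤ) → A) : (Fin n → ℤ) → A := fun m =>
  if σ then h⁻¹ • (f (m + Pi.single i 1) - f m) else h⁻¹ • (f m - f (m - Pi.single i 1))

/-- `m ∓ εᵢ` (upper sign paired with the forward difference). -/
def shiftB {n : ℕ} (σ : Bool) (i : Fin n) (m : Fin n → ℤ) : Fin n → ℤ :=
  if σ then m - Pi.single i 1 else m + Pi.single i 1

/-- One-dimensional factorial power `(x)_∓^{(s)} = ∏_{k=0}^{s-1} (x ∓ k h)`
(upper sign paired with the forward difference `σ = true`). -/
def factPow (σ : Bool) (h x : ℝ) (s : ℕ) : ℝ :=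
  ∏ k ∈ range s, (x - sgn σ * k * h)

/-- Multi-index factorial power `(mh)_∓^{(α)}`. -/
def mfp {n : ℕ} (σ : Bool) (h : ℝ) (m : Fin n → ℤ) (α : Fin n → ℕ) : ℝ :=
  ∏ i, factPow σ h (m i * h) (α i)

/-- The difference Dirac operator `D_h^± = Σᵢ eᵢ ∂_h^{±i}`. -/
def Dirac (n : ℕ) (σ : Bool) (h : ℝ) (f : (Fin n → ℤ) → Cl n) : (Fin n → ℤ) → Cl n :=
  fun m => ∑ i, eCl n i * fdiff σ h i f m

/-- The Clifford vector `mh = Σᵢ (mᵢ h) eᵢ`. -/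
def vecCl (n : ℕ) (h : ℝ) (m : Fin n → ℤ) : Cl n := ∑ i, ((m i : ℝ) * h) • eCl n i

/-- The difference Euler operator `(E_h^± f)(m) = Σᵢ (mᵢ h) (∂_h^{±i} f)(m ∓ εᵢ)`. -/
def Euler (n : ℕ) (σ : Bool) (h : ℝ) (f : (Fin n → ℤ) → Cl n) : (Fin n → ℤ) → Cl n :=
  fun m => ∑ i, ((m i : ℝ) * h) • fdiff σ h i f (shiftB σ i m)

/-- The second-order operator `(A_h^± f)(m) = ∓ h Σᵢ (mᵢ h) (∂_h^{±i} ∂_h^{∓i} f)(m)`. -/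
def Aop (n : ℕ) (σ : Bool) (h : ℝ) (f : (Fin n → ℤ) → Cl n) : (Fin n → ℤ) → Cl n :=
  fun m => (-(sgn σ) * h) • ∑ i, ((m i : ℝ) * h) • fdiff σ h i (fdiff (!σ) h i f) m

/-- `L_{jk}^± f = (mⱼ h) ∂_h^{±k} f − (m_k h) ∂_h^{±j} f`. -/
def Lop (n : ℕ) (σ : Bool) (h : ℝ) (j k : Fin n) (f : (Fin n → ℤ) → Cl n) :
    (Fin n → ℤ) → Cl n :=
  fun m => ((m j : ℝ) * h) • fdiff σ h k f m - ((m k : ℝ) * h) • fdiff σ h j f m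

/-- The difference Gamma operator `Γ_h^± f = −Σ_{j<k} eⱼ e_k L_{jk}^± f − A_h^± f`. -/
def Gamma (n : ℕ) (σ : Bool) (h : ℝ) (f : (Fin n → ℤ) → Cl n) : (Fin n → ℤ) → Cl n :=
  fun m => -(∑ j, ∑ k, if j < k then eCl n j * eCl n k * Lop n σ h j k f m else 0)
    - Aop n σ h f m

/-- `B_h^± = ±h Σᵢ ∂_h^{±i}`. -/
def Bop (n : ℕ) (σ : Bool) (h : ℝ) (f : (Fin n → ℤ) → Cl n) : (Fin n → ℤ) → Cl n :=
  fun m => (sgn σ * h) • ∑ i, fdiff σ h i f m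

/-- `(C_h^± f)(m) = Σᵢ (mᵢ h) eᵢ f(m ∓ εᵢ)`. -/
def Cop (n : ℕ) (σ : Bool) (h : ℝ) (f : (Fin n → ℤ) → Cl n) : (Fin n → ℤ) → Cl n :=
  fun m => ∑ i, ((m i : ℝ) * h) • (eCl n i * f (shiftB σ i m))

/-- `V_{h,r}^± = r I + E_h^± − A_h^± + (1/2) B_h^±`. -/
def Vop (n : ℕ) (σ : Bool) (h r : ℝ) (f : (Fin n → ℤ) → Cl n) : (Fin n → ℤ) → Cl n :=
  fun m => r • f m + Euler n σ h f m - Aop n σ h f m + (1/2 : ℝ) • Bop n σ h f m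

/-- `Π_k^±`: the real span of the lattice functions `m ↦ (mh)_∓^{(α)} a` with `|α| ≤ k`. -/
def PiLe (n : ℕ) (σ : Bool) (h : ℝ) (k : ℕ) : Submodule ℝ ((Fin n → ℤ) → Cl n) :=
  Submodule.span ℝ {f | ∃ (α : Fin n → ℕ) (a : Cl n),
    (∑ i, α i) ≤ k ∧ f = fun m => mfp σ h m α • a}

/-- The space of homogeneous discrete polynomials of degree exactly `k`:
the real span of the lattice functions `m ↦ (mh)_∓^{(α)} a` with `|α| = k`. -/
def PiEq (n : ℕ) (σ : Bool) (h : ℝ) (k : ℕ) : Submodule ℝ ((Fin n → ℤ) → Cl n) :=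
  Submodule.span ℝ {f | ∃ (α : Fin n → ℕ) (a : Cl n),
    (∑ i, α i) = k ∧ f = fun m => mfp σ h m α • a}

-- auxiliary
lemma key (c x : ℝ) (s : ℕ) :
    x * (∏ k ∈ range s, (x - k * c) - ∏ k ∈ range s, (x - (k + 1) * c))
    = s * c * ∏ k ∈ range s, (x - k * c) := by
  cases s with
  | zero => simp
  | succ t =>
    rw [Finset.prod_range_succ' (fun k => x - k * c) t, Finset.prod_range_succ]
    push_cast
    ring

lemma factPow_shift (σ : Bool) (h x : ℝ) (s : ℕ) :
    x * (factPow σ h x s - factPow σ h (x - sgn σ * h) s)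
    = s * (sgn σ * h) * factPow σ h x s := by
  have h1 : factPow σ h x s = ∏ k ∈ range s, (x - k * (sgn σ * h)) :=
    Finset.prod_congr rfl (fun k _ => by ring)
  have h2 : factPow σ h (x - sgn σ * h) s = ∏ k ∈ range s, (x - (k + 1) * (sgn σ * h)) :=
    Finset.prod_congr rfl (fun k _ => by push_cast; ring)
  rw [h1, h2, key]

lemma fdiff_add {n : ℕ} (σ : Bool) (h : ℝ) (i : Fin n) (f g : (Fin n → ℤ) → Cl n) :
    fdiff σ h i (f + g) = fdiff σ h i f + fdiff σ h i g := by
  funext m; cases σ <;> simp [fdiff, smul_sub, smul_add] <;> abel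

lemma fdiff_smul {n : ℕ} (σ : Bool) (h : ℝ) (i : Fin n) (r : ℝ) (f : (Fin n → ℤ) → Cl n) :
    fdiff σ h i (r • f) = r • fdiff σ h i f := by
  funext m; cases σ <;> simp [fdiff, smul_sub, smul_comm h⁻¹ r]

lemma euler_basis (n : ℕ) (σ : Bool) (h : ℝ) (hh : h ≠ 0) (α : Fin n → ℕ) (a : Cl n) :
    Euler n σ h (fun m => mfp σ h m α • a)
      = fun m => ((∑ i, α i : ℕ) : ℝ) • (mfp σ h m α • a) := by
  funext m
  have hterm : ∀ i : Fin n,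
      ((m i : ℝ) * h) • fdiff σ h i (fun m' => mfp σ h m' α • a) (shiftB σ i m)
        = ((α i : ℝ)) • (mfp σ h m α • a) := by
    intro i
    set x : ℝ := (m i : ℝ) * h with hx
    set D : ℝ := ∏ j ∈ univ.erase i, factPow σ h (m j * h) (α j) with hD
    have hm : mfp σ h m α = factPow σ h x (α i) * D :=
      (Finset.mul_prod_erase univ _ (mem_univ i)).symm
    have hshift : mfp σ h (shiftB σ i m) α = factPow σ h (x - sgn σ * h) (α i) * D := by
      rw [mfp, ← Finset.mul_prod_erase univ _ (mem_univ i)]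
      congr 1
      · congr 1
        cases σ <;>
          simp [shiftB, sgn, Pi.sub_apply, Pi.add_apply, Pi.single_eq_same, hx] <;>
          push_cast <;> ring
      · refine Finset.prod_congr rfl fun j hj => ?_
        have hji : j ≠ i := (Finset.mem_erase.mp hj).1
        cases σ <;> simp [shiftB, Pi.sub_apply, Pi.add_apply, Pi.single_eq_of_ne hji]
    have hfd : fdiff σ h i (fun m' => mfp σ h m' α • a) (shiftB σ i m)
        = (sgn σ * h⁻¹ * (mfp σ h m α - mfp σ h (shiftB σ i m) α)) • a := by
      have h1 : m - Pi.single i 1 + Pi.single i 1 = m := by abel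
      have h2 : m + Pi.single i 1 - Pi.single i 1 = m := by abel
      cases σ <;> simp only [fdiff, shiftB, if_true, if_false, Bool.false_eq_true,
        ite_true, ite_false, h1, h2, ← sub_smul, smul_smul, sgn] <;> ring_nf
    rw [hfd, smul_smul, hm, hshift]
    have keyid := factPow_shift σ h x (α i)
    have hs2 : sgn σ * sgn σ = 1 := by cases σ <;> norm_num [sgn]
    rw [← smul_assoc, smul_eq_mul]
    congr 1
    have hhh : h⁻¹ * h = 1 := inv_mul_cancel₀ hh
    linear_combination (sgn σ * h⁻¹ * D) * keyid
      + ((h⁻¹ * h) * (α i : ℝ) * factPow σ h x (α i) * D) * hs2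
      + ((α i : ℝ) * factPow σ h x (α i) * D) * hhh
  rw [Euler]
  rw [Finset.sum_congr rfl (fun i _ => hterm i), ← Finset.sum_smul]
  norm_cast

/-- The difference Euler operator measures the degree of homogeneity:
`E_h^± P = k P` for homogeneous discrete polynomials `P` of degree `k`. -/
theorem euler_measures_homogeneity (n : ℕ) (hn : 1 ≤ n) (h : ℝ) (hh : 0 < h) (σ : Bool)
    (k : ℕ) (P : (Fin n → ℤ) → Cl n) (hP : P ∈ PiEq n σ h k) :
    Euler n σ h P = (k : ℝ) • P := by
  induction hP using Submodule.span_induction with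
  | mem f hf =>
    obtain ⟨α, a, hα, rfl⟩ := hf
    rw [euler_basis n σ h hh.ne' α a, hα]
    rfl
  | zero => funext m; simp [Euler, fdiff]
  | add f g _ _ hf hg =>
    funext m
    have : Euler n σ h (f + g) = Euler n σ h f + Euler n σ h g := by
      funext m'; simp [Euler, fdiff_add, Finset.sum_add_distrib, smul_add]
    rw [this, hf, hg]; simp [smul_add]
  | smul r f _ hf =>
    funext m
    have : Euler n σ h (r • f) = r • Euler n σ h f := by
      funext m'; simp [Euler, fdiff_smul, Finset.smul_sum, smul_comm r]
    rw [this, hf]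
    simp only [Pi.smul_apply]
    rw [smul_comm]
end
end

section
/- For every lattice function f : ℤⁿ → Cl_{0,n}, every m ∈ ℤⁿ, and each sign choice, (mh)·(D_h^± f)(m) = −((E_h^± + Γ_h^±) f)(m), i.e. left multiplication of the difference Dirac operator by the vector variable equals minus the sum of the difference Euler and Gamma operators. -/
open Finset

noncomputable section

section Aux

lemma eCl_sq (n : ℕ) (i : Fin n) : eCl n i * eCl n i = -1 := by
  rw [eCl, CliffordAlgebra.ι_sq_scalar]
  have : negQ n (Pi.single i 1) = -1 := by
    simp [negQ, QuadraticMap.weightedSumSquares_apply, Pi.single_apply]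
  rw [this]; simp

lemma eCl_anticomm (n : ℕ) {i j : Fin n} (hij : i ≠ j) :
    eCl n i * eCl n j = -(eCl n j * eCl n i) := by
  have hswap := CliffordAlgebra.ι_mul_ι_add_swap (Q := negQ n) (Pi.single i 1) (Pi.single j 1)
  have hp : QuadraticMap.polar (negQ n) (Pi.single i 1) (Pi.single j 1) = 0 := by
    have hQ : ∀ v : Fin n → ℝ, negQ n v = -∑ k, v k * v k := by
      intro v
      simp [negQ, QuadraticMap.weightedSumSquares_apply, Finset.sum_neg_distrib]
    have hxy : ∀ k, (Pi.single i 1 : Fin n → ℝ) k * (Pi.single j 1 : Fin n → ℝ) k = 0 := by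
      intro k
      rcases eq_or_ne k i with rfl | hk
      · simp [Pi.single_apply, hij.symm]
      · simp [Pi.single_apply, hk]
    simp only [QuadraticMap.polar, hQ, Pi.add_apply]
    have expand : ∑ k, ((Pi.single i 1 : Fin n → ℝ) k + (Pi.single j 1 : Fin n → ℝ) k)
          * ((Pi.single i 1 : Fin n → ℝ) k + (Pi.single j 1 : Fin n → ℝ) k)
        = (∑ k, (Pi.single i 1 : Fin n → ℝ) k * (Pi.single i 1 : Fin n → ℝ) k)
          + ∑ k, (Pi.single j 1 : Fin n → ℝ) k * (Pi.single j 1 : Fin n → ℝ) k := by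
      rw [← Finset.sum_add_distrib]
      refine Finset.sum_congr rfl fun k _ => ?_
      nlinarith [hxy k]
    rw [expand]; ring
  rw [hp] at hswap
  simp only [map_zero] at hswap
  rw [eCl, eCl]
  linear_combination (norm := noncomm_ring) hswap

lemma sum_pairs {A : Type*} [AddCommGroup A] {n : ℕ} (T : Fin n → Fin n → A) :
    ∑ i, ∑ j, T i j
      = (∑ i, T i i) + ∑ j, ∑ k, if j < k then T j k + T k j else 0 := by
  have h1 : ∀ i j : Fin n, T i j
      = (if i = j then T i j else 0)
        + ((if i < j then T i j else 0) + (if j < i then T i j else 0)) := by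
    intro i j
    rcases lt_trichotomy i j with hlt | heq | hgt
    · simp [hlt, hlt.ne, lt_asymm hlt]
    · simp [heq]
    · simp [hgt, hgt.ne', lt_asymm hgt]
  calc ∑ i, ∑ j, T i j
      = ∑ i, ∑ j, ((if i = j then T i j else 0)
          + ((if i < j then T i j else 0) + (if j < i then T i j else 0))) :=
        Finset.sum_congr rfl fun i _ => Finset.sum_congr rfl fun j _ => h1 i j
    _ = (∑ i, ∑ j, if i = j then T i j else 0)
        + ((∑ i, ∑ j, if i < j then T i j else 0) + (∑ i, ∑ j, if j < i then T i j else 0)) := by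
        simp [Finset.sum_add_distrib]
    _ = (∑ i, T i i)
        + ((∑ j, ∑ k, if j < k then T j k else 0) + (∑ j, ∑ k, if j < k then T k j else 0)) := by
        congr 1
        · simp [Finset.sum_ite_eq]
        · congr 1
          rw [Finset.sum_comm]
    _ = (∑ i, T i i) + ∑ j, ∑ k, if j < k then T j k + T k j else 0 := by
        congr 1
        rw [← Finset.sum_add_distrib]
        refine Finset.sum_congr rfl fun j _ => ?_
        rw [← Finset.sum_add_distrib]
        refine Finset.sum_congr rfl fun k _ => ?_
        split_ifs <;> simp

lemma fdiff_shiftB (n : ℕ) (h : ℝ) (hh : 0 < h) (σ : Bool) (i : Fin n)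
    (f : (Fin n → ℤ) → Cl n) (m : Fin n → ℤ) :
    fdiff σ h i f (shiftB σ i m)
      = fdiff σ h i f m + (-(sgn σ) * h) • fdiff σ h i (fdiff (!σ) h i f) m := by
  have hne : h ≠ 0 := hh.ne'
  cases σ
  case false =>
    simp only [fdiff, shiftB, sgn, Bool.not_false, if_false, Bool.false_eq_true, reduceIte,
      add_sub_cancel_right, sub_add_cancel, smul_smul]
    rw [show - -(1:ℝ) * h * h⁻¹ = 1 from by field_simp]
    module
  case true =>
    simp only [fdiff, shiftB, sgn, Bool.not_true, if_true, Bool.false_eq_true, reduceIte,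
      add_sub_cancel_right, sub_add_cancel, smul_smul]
    rw [show -(1:ℝ) * h * h⁻¹ = -1 from by field_simp]
    module

end Aux

/-- Identity (3.13): `(mh) (D_h^± f)(m) = −((E_h^± + Γ_h^±) f)(m)`. -/
theorem vec_mul_dirac_eq_neg_euler_add_gamma (n : ℕ) (hn : 1 ≤ n) (h : ℝ) (hh : 0 < h)
    (σ : Bool) (f : (Fin n → ℤ) → Cl n) (m : Fin n → ℤ) :
    vecCl n h m * Dirac n σ h f m = -(Euler n σ h f m + Gamma n σ h f m) := by
  classical
  have euler_eq : Euler n σ h f m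
      = (∑ i, ((m i : ℝ) * h) • fdiff σ h i f m) + Aop n σ h f m := by
    rw [Euler, Aop, Finset.smul_sum, ← Finset.sum_add_distrib]
    refine Finset.sum_congr rfl fun i _ => ?_
    rw [fdiff_shiftB n h hh σ i f m, smul_add, smul_comm]
  have lhs_eq : vecCl n h m * Dirac n σ h f m
      = ∑ i, ∑ j, ((m i : ℝ) * h) • (eCl n i * (eCl n j * fdiff σ h j f m)) := by
    rw [vecCl, Dirac, Finset.sum_mul_sum]
    refine Finset.sum_congr rfl fun i _ => Finset.sum_congr rfl fun j _ => ?_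
    simp only [smul_mul_assoc, mul_assoc]
  have diag : ∀ i : Fin n, ((m i : ℝ) * h) • (eCl n i * (eCl n i * fdiff σ h i f m))
      = -(((m i : ℝ) * h) • fdiff σ h i f m) := by
    intro i
    rw [← mul_assoc, eCl_sq, neg_one_mul, smul_neg]
  have off : ∀ i j : Fin n, i < j →
      ((m i : ℝ) * h) • (eCl n i * (eCl n j * fdiff σ h j f m))
        + ((m j : ℝ) * h) • (eCl n j * (eCl n i * fdiff σ h i f m))
      = eCl n i * eCl n j * Lop n σ h i j f m := by
    intro i j hij
    rw [Lop, mul_sub, mul_smul_comm, mul_smul_comm, ← mul_assoc, ← mul_assoc,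
      eCl_anticomm n hij.ne']
    simp only [neg_mul, smul_neg]
    abel
  rw [lhs_eq, sum_pairs]
  have hdiag : (∑ i, ((m i : ℝ) * h) • (eCl n i * (eCl n i * fdiff σ h i f m)))
      = -∑ i, ((m i : ℝ) * h) • fdiff σ h i f m := by
    rw [← Finset.sum_neg_distrib]
    exact Finset.sum_congr rfl fun i _ => diag i
  have hoff : (∑ j, ∑ k, if j < k then
        ((m j : ℝ) * h) • (eCl n j * (eCl n k * fdiff σ h k f m))
          + ((m k : ℝ) * h) • (eCl n k * (eCl n j * fdiff σ h j f m)) else 0)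
      = ∑ j, ∑ k, if j < k then eCl n j * eCl n k * Lop n σ h j k f m else 0 := by
    refine Finset.sum_congr rfl fun j _ => Finset.sum_congr rfl fun k _ => ?_
    split_ifs with hjk
    · exact off j k hjk
    · rfl
  rw [hdiag, hoff, euler_eq, Gamma]
  abel
end
end

section
/- The discrete homogeneous powers satisfy the raising relation C_h^± H_s^± = H_{s+1}^± for every s ∈ ℕ and each sign choice, where (C_h^± f)(m) = Σ_{i=1}^n (m_i h) e_i f(m ∓ ε_i) is the discrete analogue of multiplication by the vector variable. -/
open Finset

noncomputable section

/-- The discrete homogeneous powers `H_s^±`: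
`H_{2k}^±(m) = Σ_{|α|=k} ((−1)^k k!/α!) (mh)_∓^{(2α)}` and
`H_{2k+1}^±(m) = Σ_{|α|=k} Σᵢ ((−1)^k k!/α!) (mh)_∓^{(2α+εᵢ)} eᵢ`. -/
def Hpow (n : ℕ) (σ : Bool) (h : ℝ) (s : ℕ) : (Fin n → ℤ) → Cl n := fun m =>
  if s % 2 = 0 then
    ∑ α ∈ Finset.Nat.antidiagonalTuple n (s / 2),
      (((-1 : ℝ) ^ (s / 2) * (Nat.factorial (s / 2) : ℝ) / (∏ i, (Nat.factorial (α i) : ℝ)))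
          * mfp σ h m (fun j => 2 * α j)) • (1 : Cl n)
  else
    ∑ α ∈ Finset.Nat.antidiagonalTuple n (s / 2), ∑ i,
      (((-1 : ℝ) ^ (s / 2) * (Nat.factorial (s / 2) : ℝ) / (∏ j, (Nat.factorial (α j) : ℝ)))
          * mfp σ h m (fun j => 2 * α j + if j = i then 1 else 0)) • eCl n i

/-!
Multiplying by the coordinate `mᵢ h` and shifting by `∓ εᵢ` raises the discrete factorial power
in direction `i`: `(mᵢ h) (mh ∓ εᵢh)^{(α)} = (mh)^{(α + εᵢ)}` (`mfp_shiftB`). Applied to `H_{2k}`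
this gives `H_{2k+1}` term by term. Applied to `H_{2k+1}` it gives `Σ_{i,j} c_{ij} eᵢ eⱼ` with
`c` symmetric, which `eᵢ eⱼ + eⱼ eᵢ = −2δᵢⱼ` collapses to `−Σᵢ cᵢᵢ`; after reindexing by
`β = α + εᵢ`, the identity `Σᵢ βᵢ = k + 1` turns the coefficients `(−1)^k k!/α!` into
`(−1)^{k+1} (k+1)!/β!`.
-/

lemma eCl_mul_eCl_add_swap {n : ℕ} (i j : Fin n) :
    eCl n i * eCl n j + eCl n j * eCl n i = if i = j then -2 else 0 := by
  have hpolar : QuadraticMap.polar (negQ n) (Pi.single i 1) (Pi.single j 1)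
      = if i = j then -2 else 0 := by
    simp only [QuadraticMap.polar, negQ, QuadraticMap.weightedSumSquares_apply, smul_eq_mul,
      Pi.add_apply, ← Finset.sum_sub_distrib]
    calc _ = ∑ x, -2 * ((Pi.single i 1 : Fin n → ℝ) x * (Pi.single j 1 : Fin n → ℝ) x) :=
          Finset.sum_congr rfl fun x _ => by ring
      _ = _ := by simp [Pi.single_apply, eq_comm]
  rw [eCl, eCl, CliffordAlgebra.ι_mul_ι_add_swap, hpolar]
  split_ifs <;> simp [map_ofNat]

lemma sum_sum_smul_eCl_mul_eCl {n : ℕ} (g : Fin n → Fin n → ℝ) (hg : ∀ i j, g i j = g j i) :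
    ∑ i, ∑ j, g i j • (eCl n i * eCl n j) = -∑ i, g i i • (1 : Cl n) := by
  have hswap : ∑ i, ∑ j, g i j • (eCl n i * eCl n j)
      = ∑ i, ∑ j, g i j • (eCl n j * eCl n i) := by
    rw [Finset.sum_comm]
    simp only [hg]
  have hdouble : ∑ i, ∑ j, g i j • (eCl n i * eCl n j) + ∑ i, ∑ j, g i j • (eCl n i * eCl n j)
      = -((2 : ℝ) • ∑ i, g i i • (1 : Cl n)) := by
    nth_rewrite 2 [hswap]
    simp only [← Finset.sum_add_distrib, ← smul_add, eCl_mul_eCl_add_swap, smul_ite, smul_zero,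
      Finset.sum_ite_eq, Finset.mem_univ, if_true, Finset.smul_sum]
    rw [← Finset.sum_neg_distrib]
    refine Finset.sum_congr rfl fun i _ => ?_
    rw [smul_comm, ← smul_neg, two_smul, one_add_one_eq_two]
  linear_combination (norm := module) (1 / 2 : ℝ) • hdouble

lemma factPow_succ (σ : Bool) (h x : ℝ) (s : ℕ) :
    x * factPow σ h (x - sgn σ * h) s = factPow σ h x (s + 1) := by
  rw [factPow, factPow, Finset.prod_range_succ', Nat.cast_zero, mul_zero, zero_mul, sub_zero,
    mul_comm]
  congr 1
  refine Finset.prod_congr rfl fun k _ => ?_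
  push_cast
  ring

lemma mfp_shiftB {n : ℕ} (σ : Bool) (h : ℝ) (m : Fin n → ℤ) (i : Fin n) (α : Fin n → ℕ) :
    ((m i : ℝ) * h) * mfp σ h (shiftB σ i m) α = mfp σ h m (α + Pi.single i 1) := by
  rw [mfp, mfp, ← Finset.mul_prod_erase _ _ (Finset.mem_univ i),
    ← Finset.mul_prod_erase _ _ (Finset.mem_univ i), ← mul_assoc]
  congr 1
  · have hshift : ((shiftB σ i m i : ℤ) : ℝ) * h = (m i : ℝ) * h - sgn σ * h := by
      cases σ <;> simp [shiftB, sgn] <;> ring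
    rw [hshift, factPow_succ, Pi.add_apply, Pi.single_eq_same]
  · refine Finset.prod_congr rfl fun j hj => ?_
    have hji : j ≠ i := Finset.ne_of_mem_erase hj
    cases σ <;> simp [shiftB, hji]

lemma sum_antidiagonalTuple_add_single {M : Type*} [AddCommMonoid M] {n : ℕ} (k : ℕ)
    (i : Fin n) (F : (Fin n → ℕ) → M) (hF : ∀ β, β i = 0 → F β = 0) :
    ∑ α ∈ Finset.Nat.antidiagonalTuple n k, F (α + Pi.single i 1)
      = ∑ β ∈ Finset.Nat.antidiagonalTuple n (k + 1), F β := by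
  refine Finset.sum_bij_ne_zero (fun α _ _ => α + Pi.single i 1) ?_ ?_ ?_ fun _ _ _ => rfl
  · intro α hα _
    simp_all [Finset.Nat.mem_antidiagonalTuple, Finset.sum_add_distrib]
  · intro α _ _ α' _ _ h
    exact add_right_cancel h
  · intro β hβ hFβ
    have hβi : 1 ≤ β i := Nat.one_le_iff_ne_zero.mpr fun h0 => hFβ (hF β h0)
    have hle : Pi.single i 1 ≤ β := by
      intro j
      rcases eq_or_ne j i with rfl | hji <;> simp [*]
    refine ⟨β - Pi.single i 1, ?_, ?_, tsub_add_cancel_of_le hle⟩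
    · rw [Finset.Nat.mem_antidiagonalTuple] at hβ ⊢
      have hsum := congrArg (fun γ : Fin n → ℕ => ∑ j, γ j) (tsub_add_cancel_of_le hle)
      simp only [Pi.add_apply, Finset.sum_add_distrib, Finset.sum_pi_single', Finset.mem_univ,
        if_true] at hsum
      omega
    · rwa [tsub_add_cancel_of_le hle]

lemma prod_factorial_add_single {n : ℕ} (α : Fin n → ℕ) (i : Fin n) :
    ∏ j, ((α + Pi.single i 1 : Fin n → ℕ) j).factorial = (α i + 1) * ∏ j, (α j).factorial := by
  rw [← Finset.mul_prod_erase _ _ (Finset.mem_univ i),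
    ← Finset.mul_prod_erase _ (fun j => (α j).factorial) (Finset.mem_univ i), ← mul_assoc,
    Pi.add_apply, Pi.single_eq_same, Nat.factorial_succ]
  congr 1
  refine Finset.prod_congr rfl fun j hj => ?_
  rw [Pi.add_apply, Pi.single_eq_of_ne (Finset.ne_of_mem_erase hj), add_zero]

def hpowCoeff {n : ℕ} (k : ℕ) (α : Fin n → ℕ) : ℝ :=
  (-1) ^ k * (Nat.factorial k : ℝ) / ∏ j, (Nat.factorial (α j) : ℝ)

lemma hpowCoeff_eq_neg_mul_hpowCoeff_add_single {n : ℕ} (k : ℕ) (α : Fin n → ℕ) (i : Fin n) :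
    hpowCoeff k α
      = -(((α + Pi.single i 1 : Fin n → ℕ) i : ℝ) / (k + 1))
          * hpowCoeff (k + 1) (α + Pi.single i 1) := by
  have hprod := congrArg (Nat.cast : ℕ → ℝ) (prod_factorial_add_single α i)
  push_cast at hprod
  have hpos : (0 : ℝ) < ∏ j, (Nat.factorial (α j) : ℝ) := by positivity
  rw [hpowCoeff, hpowCoeff, hprod, Pi.add_apply, Pi.single_eq_same, Nat.factorial_succ]
  push_cast
  field_simp
  ring

lemma sum_sum_hpowCoeff_smul_add_single {M : Type*} [AddCommGroup M] [Module ℝ M] {n : ℕ}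
    (k : ℕ) (F : (Fin n → ℕ) → M) :
    ∑ i, ∑ α ∈ Finset.Nat.antidiagonalTuple n k, hpowCoeff k α • F (α + Pi.single i 1)
      = -∑ β ∈ Finset.Nat.antidiagonalTuple n (k + 1), hpowCoeff (k + 1) β • F β := by
  have hreindex : ∀ i, ∑ α ∈ Finset.Nat.antidiagonalTuple n k,
      hpowCoeff k α • F (α + Pi.single i 1) = ∑ β ∈ Finset.Nat.antidiagonalTuple n (k + 1),
        (-((β i : ℝ) / (k + 1)) * hpowCoeff (k + 1) β) • F β := by
    intro i
    rw [← sum_antidiagonalTuple_add_single k i _ fun β hβ => by simp [hβ]]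
    exact Finset.sum_congr rfl fun α _ => by
      rw [hpowCoeff_eq_neg_mul_hpowCoeff_add_single k α i]
  simp only [hreindex]
  rw [Finset.sum_comm, ← Finset.sum_neg_distrib]
  refine Finset.sum_congr rfl fun β hβ => ?_
  rw [← Finset.sum_smul, ← neg_smul]
  congr 1
  have hsum : ∑ i, (β i : ℝ) = k + 1 := by
    exact_mod_cast (Finset.Nat.mem_antidiagonalTuple.mp hβ)
  rw [← Finset.sum_mul, Finset.sum_neg_distrib, ← Finset.sum_div, hsum]
  field_simp

lemma Hpow_two_mul (n : ℕ) (σ : Bool) (h : ℝ) (k : ℕ) :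
    Hpow n σ h (2 * k) = fun m => ∑ α ∈ Finset.Nat.antidiagonalTuple n k,
      (hpowCoeff k α * mfp σ h m (2 • α)) • (1 : Cl n) := by
  funext m
  rw [Hpow, if_pos (by omega), Nat.mul_div_cancel_left k two_pos]
  rfl

lemma Hpow_two_mul_add_one (n : ℕ) (σ : Bool) (h : ℝ) (k : ℕ) :
    Hpow n σ h (2 * k + 1) = fun m => ∑ α ∈ Finset.Nat.antidiagonalTuple n k, ∑ i,
      (hpowCoeff k α * mfp σ h m (2 • α + Pi.single i 1)) • eCl n i := by
  funext m
  rw [Hpow, if_neg (by omega), show (2 * k + 1) / 2 = k by omega]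
  refine Finset.sum_congr rfl fun α _ => Finset.sum_congr rfl fun i _ => ?_
  congr 3
  funext j
  simp [Pi.single_apply]

lemma Cop_Hpow_two_mul (n : ℕ) (σ : Bool) (h : ℝ) (k : ℕ) :
    Cop n σ h (Hpow n σ h (2 * k)) = Hpow n σ h (2 * k + 1) := by
  funext m
  simp only [Cop, Hpow_two_mul, Hpow_two_mul_add_one, Finset.mul_sum, Finset.smul_sum,
    mul_smul_comm, mul_one, smul_smul]
  rw [Finset.sum_comm]
  refine Finset.sum_congr rfl fun α _ => Finset.sum_congr rfl fun i _ => ?_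
  rw [mul_left_comm, mfp_shiftB]

lemma Cop_Hpow_two_mul_add_one (n : ℕ) (σ : Bool) (h : ℝ) (k : ℕ) :
    Cop n σ h (Hpow n σ h (2 * k + 1)) = Hpow n σ h (2 * (k + 1)) := by
  funext m
  calc Cop n σ h (Hpow n σ h (2 * k + 1)) m
      = ∑ α ∈ Finset.Nat.antidiagonalTuple n k, ∑ i, ∑ j,
          (hpowCoeff k α * mfp σ h m (2 • α + Pi.single j 1 + Pi.single i 1))
            • (eCl n i * eCl n j) := by
        simp only [Cop, Hpow_two_mul_add_one, Finset.mul_sum, Finset.smul_sum, mul_smul_comm,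
          smul_smul]
        rw [Finset.sum_comm]
        refine Finset.sum_congr rfl fun α _ => Finset.sum_congr rfl fun i _ =>
          Finset.sum_congr rfl fun j _ => ?_
        rw [mul_left_comm, mfp_shiftB]
    _ = -∑ i, ∑ α ∈ Finset.Nat.antidiagonalTuple n k,
          hpowCoeff k α • (mfp σ h m (2 • (α + Pi.single i 1)) • (1 : Cl n)) := by
        rw [Finset.sum_comm (s := Finset.univ), ← Finset.sum_neg_distrib]
        refine Finset.sum_congr rfl fun α _ => ?_
        rw [sum_sum_smul_eCl_mul_eCl _ fun i j => by rw [add_right_comm]]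
        simp only [smul_smul, smul_add, two_smul, add_assoc]
    _ = Hpow n σ h (2 * (k + 1)) m := by
        rw [sum_sum_hpowCoeff_smul_add_single k fun β => mfp σ h m (2 • β) • (1 : Cl n), neg_neg,
          Hpow_two_mul]
        simp only [smul_smul]

theorem Cop_Hpow_general (n : ℕ) (h : ℝ) (σ : Bool) (s : ℕ) :
    Cop n σ h (Hpow n σ h s) = Hpow n σ h (s + 1) := by
  obtain ⟨k, rfl | rfl⟩ := Nat.even_or_odd' s
  · exact Cop_Hpow_two_mul n σ h k
  · exact Cop_Hpow_two_mul_add_one n σ h k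

/-- The raising relation `C_h^± H_s^± = H_{s+1}^±` for the discrete homogeneous powers. -/
theorem Cop_Hpow (n : ℕ) (hn : 1 ≤ n) (h : ℝ) (hh : 0 < h) (σ : Bool) (s : ℕ) :
    Cop n σ h (Hpow n σ h s) = Hpow n σ h (s + 1) :=
  Cop_Hpow_general n h σ s
end
end
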